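/- Let n ≥ 7 and 0 < s < 2. With U₁ the standard Hardy-Sobolev bubble and 2⋆(s) = 2(n-s)/(n-2), the combination ∫_{ℝⁿ}|X|⁴|∇U₁|² dX / ∫_{ℝⁿ}|X|²U₁² dX − (2/2⋆(s)) ∫_{ℝⁿ}|X|^{4-s}U₁^{2⋆(s)} dX / ∫_{ℝⁿ}|X|²U₁² dX equals (n+2)(n-2)(10-s) / (2(2n-2-s)). -/

import Mathlib

/-!
All three integrands are radial, so polar coordinates turn them into one-dimensional moments
`∫₀^∞ r ^ a (1 + r ^ σ) ^ (-b) dr` with `σ = 2 - s`, and the common factor `|S^{n-1}| κ²` cancels.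
Integrating `d/dr (r ^ (a + 1) (1 + r ^ σ) ^ (-b))` by parts, together with
`(1 + r ^ σ) ^ (-b) = (1 + r ^ σ) ^ (-b-1) (1 + r ^ σ)`, expresses every moment that occurs as a
rational multiple of `∫₀^∞ r ^ (n+1) (1 + r ^ σ) ^ (-2(n-2)/σ) dr`, which then cancels as well.
The moment coming from the gradient term converges only for `n > 6`.
-/

open MeasureTheory

noncomputable def kappa (n : ℕ) (s : ℝ) : ℝ :=
  (((n : ℝ) - s) * ((n : ℝ) - 2)) ^ (((n : ℝ) - 2) / (2 * (2 - s)))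

noncomputable def U1 (n : ℕ) (s : ℝ) (X : EuclideanSpace ℝ (Fin n)) : ℝ :=
  kappa n s * (1 + ‖X‖ ^ (2 - s)) ^ (-(((n : ℝ) - 2) / (2 - s)))

noncomputable def critExp (n : ℕ) (s : ℝ) : ℝ := 2 * ((n : ℝ) - s) / ((n : ℝ) - 2)

open Real Set Filter Topology InnerProductSpace

noncomputable def radialMoment (σ a b : ℝ) : ℝ := ∫ r in Ioi (0 : ℝ), r ^ a * (1 + r ^ σ) ^ (-b)

section RadialMoment

variable {σ a b : ℝ}

lemma continuousOn_rpow_mul_one_add_rpow_neg :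
    ContinuousOn (fun r : ℝ => r ^ a * (1 + r ^ σ) ^ (-b)) (Ioi 0) := by
  intro r (hr : 0 < r)
  have h1 : 0 < 1 + r ^ σ := by positivity
  exact ((continuousAt_rpow_const r a (Or.inl hr.ne')).mul
    ((continuousAt_const.add (continuousAt_rpow_const r σ (Or.inl hr.ne'))).rpow_const
      (Or.inl h1.ne'))).continuousWithinAt

lemma one_add_rpow_rpow_neg_le_one {r : ℝ} (hr : 0 ≤ r) (hb : 0 ≤ b) :
    (1 + r ^ σ) ^ (-b) ≤ 1 :=
  rpow_le_one_of_one_le_of_nonpos (by linarith [rpow_nonneg hr σ]) (by linarith)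

lemma one_add_rpow_rpow_neg_le_rpow {r : ℝ} (hr : 0 < r) (hb : 0 ≤ b) :
    (1 + r ^ σ) ^ (-b) ≤ r ^ (-(σ * b)) := by
  have hrσ : 0 < r ^ σ := rpow_pos_of_pos hr σ
  calc (1 + r ^ σ) ^ (-b) ≤ (r ^ σ) ^ (-b) := rpow_le_rpow_of_nonpos hrσ (by linarith) (by linarith)
    _ = r ^ (-(σ * b)) := by rw [← rpow_mul hr.le]; ring_nf

lemma integrableOn_rpow_mul_one_add_rpow_neg (ha : -1 < a) (hb : 0 ≤ b) (hab : a + 1 < σ * b) :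
    IntegrableOn (fun r : ℝ => r ^ a * (1 + r ^ σ) ^ (-b)) (Ioi 0) := by
  have hcont := continuousOn_rpow_mul_one_add_rpow_neg (σ := σ) (a := a) (b := b)
  rw [← Ioc_union_Ioi_eq_Ioi zero_le_one]
  refine IntegrableOn.union ?_ ?_
  · have hdom : IntegrableOn (fun r : ℝ => r ^ a) (Ioc 0 1) :=
      (intervalIntegrable_iff_integrableOn_Ioc_of_le zero_le_one).mp
        (intervalIntegral.intervalIntegrable_rpow' ha)
    refine hdom.mono' ((hcont.mono Ioc_subset_Ioi_self).aestronglyMeasurable measurableSet_Ioc) ?_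
    filter_upwards [ae_restrict_mem measurableSet_Ioc] with r hr
    have hr0 : 0 < r := hr.1
    rw [norm_of_nonneg (by positivity)]
    exact mul_le_of_le_one_right (rpow_nonneg hr0.le a) (one_add_rpow_rpow_neg_le_one hr0.le hb)
  · have hdom : IntegrableOn (fun r : ℝ => r ^ (a + -(σ * b))) (Ioi 1) :=
      integrableOn_Ioi_rpow_of_lt (by linarith) zero_lt_one
    refine hdom.mono'
      ((hcont.mono (Ioi_subset_Ioi zero_le_one)).aestronglyMeasurable measurableSet_Ioi) ?_
    filter_upwards [ae_restrict_mem measurableSet_Ioi] with r hr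
    have hr0 : 0 < r := zero_lt_one.trans hr
    rw [norm_of_nonneg (by positivity), rpow_add hr0]
    exact mul_le_mul_of_nonneg_left (one_add_rpow_rpow_neg_le_rpow hr0 hb) (rpow_nonneg hr0.le a)

lemma radialMoment_pos (ha : -1 < a) (hb : 0 ≤ b) (hab : a + 1 < σ * b) :
    0 < radialMoment σ a b := by
  have hpos : ∀ r ∈ Ioi (0 : ℝ), 0 < r ^ a * (1 + r ^ σ) ^ (-b) := fun r (hr : 0 < r) => by
    positivity
  rw [radialMoment, setIntegral_pos_iff_support_of_nonneg_ae
    ((ae_restrict_mem measurableSet_Ioi).mono fun r hr => (hpos r hr).le)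
    (integrableOn_rpow_mul_one_add_rpow_neg ha hb hab)]
  have hsub : Ioi (0 : ℝ) ⊆ Function.support (fun r : ℝ => r ^ a * (1 + r ^ σ) ^ (-b)) ∩ Ioi 0 :=
    fun r hr => ⟨(hpos r hr).ne', hr⟩
  exact (by simp : (0 : ENNReal) < volume (Ioi (0 : ℝ))).trans_le (measure_mono hsub)

lemma hasDerivAt_rpow_mul_one_add_rpow_neg {r : ℝ} (hr : 0 < r) :
    HasDerivAt (fun r : ℝ => r ^ (a + 1) * (1 + r ^ σ) ^ (-b))
      ((a + 1) * (r ^ a * (1 + r ^ σ) ^ (-b)) -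
        σ * b * (r ^ (a + σ) * (1 + r ^ σ) ^ (-(b + 1)))) r := by
  have h1 : 0 < 1 + r ^ σ := by positivity
  refine ((hasDerivAt_rpow_const (p := a + 1) (Or.inl hr.ne')).mul
    (((hasDerivAt_rpow_const (p := σ) (Or.inl hr.ne')).const_add 1).rpow_const
      (p := -b) (Or.inl h1.ne'))).congr_deriv ?_
  simp only [add_sub_cancel_right, show -b - 1 = -(b + 1) by ring,
    show a + σ = (a + 1) + (σ - 1) by ring, rpow_add hr (a + 1)]
  ring

lemma tendsto_rpow_mul_one_add_rpow_neg_atTop (hb : 0 ≤ b) (hab : a + 1 < σ * b) :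
    Tendsto (fun r : ℝ => r ^ (a + 1) * (1 + r ^ σ) ^ (-b)) atTop (𝓝 0) := by
  refine squeeze_zero' ?_ ?_ (tendsto_rpow_neg_atTop (y := σ * b - (a + 1)) (by linarith))
  · filter_upwards [eventually_gt_atTop 0] with r hr
    positivity
  · filter_upwards [eventually_gt_atTop 0] with r hr
    rw [show -(σ * b - (a + 1)) = (a + 1) + -(σ * b) by ring, rpow_add hr (a + 1)]
    exact mul_le_mul_of_nonneg_left (one_add_rpow_rpow_neg_le_rpow hr hb) (by positivity)

lemma radialMoment_add_succ (hσ : 0 < σ) (ha : -1 < a) (hb : 0 < b) (hab : a + 1 < σ * b) :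
    radialMoment σ (a + σ) (b + 1) = (a + 1) / (σ * b) * radialMoment σ a b := by
  have hint₁ := integrableOn_rpow_mul_one_add_rpow_neg ha hb.le hab
  have hint₂ : IntegrableOn (fun r : ℝ => r ^ (a + σ) * (1 + r ^ σ) ^ (-(b + 1))) (Ioi 0) :=
    integrableOn_rpow_mul_one_add_rpow_neg (by linarith) (by linarith) (by linarith)
  have hcont : ContinuousWithinAt (fun r : ℝ => r ^ (a + 1) * (1 + r ^ σ) ^ (-b)) (Ici 0) 0 := by
    have h1 : (1 : ℝ) + 0 ^ σ ≠ 0 := by simp [zero_rpow hσ.ne']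
    exact ((continuousAt_rpow_const 0 (a + 1) (Or.inr (by linarith))).mul
      ((continuousAt_const.add (continuousAt_rpow_const 0 σ (Or.inr hσ.le))).rpow_const
        (Or.inl h1))).continuousWithinAt
  have hibp := integral_Ioi_of_hasDerivAt_of_tendsto hcont
    (fun r hr => hasDerivAt_rpow_mul_one_add_rpow_neg hr)
    ((hint₁.const_mul _).sub (hint₂.const_mul _))
    (tendsto_rpow_mul_one_add_rpow_neg_atTop hb.le hab)
  rw [integral_sub (hint₁.const_mul _) (hint₂.const_mul _), integral_const_mul,
    integral_const_mul, zero_rpow (by linarith), zero_mul, sub_zero] at hibp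
  rw [radialMoment, radialMoment, div_mul_eq_mul_div, eq_div_iff (mul_pos hσ hb).ne']
  linarith

lemma radialMoment_eq_add (hσ : 0 < σ) (ha : -1 < a) (hb : 0 ≤ b) (hab : a + 1 < σ * b) :
    radialMoment σ a b = radialMoment σ a (b + 1) + radialMoment σ (a + σ) (b + 1) := by
  rw [radialMoment, radialMoment, radialMoment, ← integral_add
    (integrableOn_rpow_mul_one_add_rpow_neg ha (by linarith) (by linarith))
    (integrableOn_rpow_mul_one_add_rpow_neg (by linarith) (by linarith) (by linarith))]
  refine setIntegral_congr_fun measurableSet_Ioi fun r (hr : 0 < r) => ?_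
  have h1 : 0 < 1 + r ^ σ := by positivity
  simp only [rpow_add hr, show -b = -(b + 1) + 1 by ring, rpow_add h1, rpow_one]
  ring

lemma radialMoment_succ (hσ : 0 < σ) (ha : -1 < a) (hb : 0 < b) (hab : a + 1 < σ * b) :
    radialMoment σ a (b + 1) = (σ * b - (a + 1)) / (σ * b) * radialMoment σ a b := by
  have hσb : σ * b ≠ 0 := (mul_pos hσ hb).ne'
  have h := radialMoment_eq_add hσ ha hb.le hab
  rw [radialMoment_add_succ hσ ha hb hab] at h
  field_simp at h ⊢
  linear_combination -h

lemma radialMoment_add_add_sub_radialMoment_add (hσ : 0 < σ) (ha : -1 < a) (hb : 0 < b)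
    (hab : a + 1 < σ * b) :
    radialMoment σ (a + σ + σ) (b + 1 + 1) - radialMoment σ (a + σ) (b + 1 + 1) =
      (a + 1) * (2 * (a + 1) + σ - σ * b) / (σ ^ 2 * b * (b + 1)) * radialMoment σ a b := by
  have hσb : σ * (b + 1) ≠ 0 := by positivity
  have hσb' : σ * b ≠ 0 := by positivity
  rw [radialMoment_add_succ (a := a + σ) (b := b + 1) hσ (by linarith) (by linarith) (by linarith),
    radialMoment_succ (a := a + σ) (b := b + 1) hσ (by linarith) (by linarith) (by linarith),
    radialMoment_add_succ hσ ha hb hab]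
  field_simp
  ring

end RadialMoment

section RadialGradient

variable {E : Type*} [NormedAddCommGroup E] [InnerProductSpace ℝ E] [CompleteSpace E]

lemma hasGradientAt_comp_norm {f : ℝ → ℝ} {f' : ℝ} {x : E} (hx : x ≠ 0)
    (hf : HasDerivAt f f' ‖x‖) : HasGradientAt (fun y => f ‖y‖) ((f' / ‖x‖) • x) x := by
  have hx' : 0 < ‖x‖ := norm_pos_iff.mpr hx
  have hsqrt : HasDerivAt (f ∘ sqrt) (f' * (1 / (2 * ‖x‖))) (‖x‖ ^ 2) := by
    have hf' : HasDerivAt f f' √(‖x‖ ^ 2) := by rwa [sqrt_sq hx'.le]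
    have h := hf'.comp _ (hasDerivAt_sqrt (by positivity))
    rwa [sqrt_sq hx'.le] at h
  have hcomp := hsqrt.comp_hasFDerivAt x (hasStrictFDerivAt_norm_sq x).hasFDerivAt
  simp only [Function.comp_def, sqrt_sq (norm_nonneg _)] at hcomp
  rw [hasGradientAt_iff_hasFDerivAt]
  refine hcomp.congr_fderiv ?_
  ext w
  simp only [smul_apply, coe_innerSL_apply, nsmul_eq_mul, smul_eq_mul, map_smul,
    toDual_apply_apply, Nat.cast_ofNat]
  field_simp

lemma norm_gradient_comp_norm {f : ℝ → ℝ} {f' : ℝ} {x : E} (hx : x ≠ 0)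
    (hf : HasDerivAt f f' ‖x‖) : ‖gradient (fun y => f ‖y‖) x‖ = |f'| := by
  rw [(hasGradientAt_comp_norm hx hf).gradient, norm_smul, norm_div, norm_norm,
    div_mul_cancel₀ _ (norm_ne_zero_iff.mpr hx), Real.norm_eq_abs]

end RadialGradient

noncomputable def unitSphereArea (n : ℕ) : ℝ :=
  n * volume.real (Metric.ball (0 : EuclideanSpace ℝ (Fin n)) 1)

lemma unitSphereArea_pos {n : ℕ} (hn : 0 < n) : 0 < unitSphereArea n := by
  have : NeZero n := ⟨hn.ne'⟩
  exact mul_pos (by exact_mod_cast hn)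
    (ENNReal.toReal_pos (Metric.measure_ball_pos _ _ one_pos).ne' measure_ball_lt_top.ne)

lemma integral_mul_norm_rpow_mul_one_add_norm_rpow {n : ℕ} (hn : 0 < n) (C p σ b : ℝ) :
    ∫ X : EuclideanSpace ℝ (Fin n), C * ‖X‖ ^ p * (1 + ‖X‖ ^ σ) ^ (-b) =
      unitSphereArea n * C * radialMoment σ (p + n - 1) b := by
  have : NeZero n := ⟨hn.ne'⟩
  rw [integral_fun_norm_addHaar volume (fun r => C * r ^ p * (1 + r ^ σ) ^ (-b)),
    finrank_euclideanSpace_fin, radialMoment, mul_assoc, ← integral_const_mul, nsmul_eq_mul,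
    smul_eq_mul, unitSphereArea, mul_assoc]
  congr 2
  refine setIntegral_congr_fun measurableSet_Ioi fun r (hr : 0 < r) => ?_
  rw [smul_eq_mul, ← rpow_natCast, Nat.cast_sub hn, Nat.cast_one, add_sub_assoc, rpow_add hr]
  ring

section Bubble

variable {n : ℕ} {s : ℝ}

lemma kappa_pos (hn : 2 < n) (hs : s < 2) : 0 < kappa n s := by
  have hn' : (2 : ℝ) < n := by exact_mod_cast hn
  exact rpow_pos_of_pos (mul_pos (by linarith) (by linarith)) _

lemma kappa_rpow_critExp (hn : 2 < n) (hs : s < 2) :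
    kappa n s ^ critExp n s = kappa n s ^ 2 * (((n : ℝ) - s) * ((n : ℝ) - 2)) := by
  have hn' : (2 : ℝ) < n := by exact_mod_cast hn
  have hM : 0 < ((n : ℝ) - s) * ((n : ℝ) - 2) := mul_pos (by linarith) (by linarith)
  have h2s : (2 : ℝ) - s ≠ 0 := by linarith
  have hn2 : (n : ℝ) - 2 ≠ 0 := by linarith
  rw [kappa, ← rpow_mul hM.le, ← rpow_natCast, ← rpow_mul hM.le, ← rpow_add_one hM.ne', critExp]
  congr 1
  field_simp
  ring

lemma U1_rpow_critExp (hn : 2 < n) (hs : s < 2) (X : EuclideanSpace ℝ (Fin n)) :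
    U1 n s X ^ critExp n s = kappa n s ^ 2 * (((n : ℝ) - s) * ((n : ℝ) - 2)) *
      (1 + ‖X‖ ^ (2 - s)) ^ (-(2 * (((n : ℝ) - 2) / (2 - s)) + 2)) := by
  have hn' : (2 : ℝ) < n := by exact_mod_cast hn
  have h2s : (2 : ℝ) - s ≠ 0 := by linarith
  have hn2 : (n : ℝ) - 2 ≠ 0 := by linarith
  have hA : 0 < 1 + ‖X‖ ^ (2 - s) := by positivity
  rw [U1, mul_rpow (kappa_pos hn hs).le (by positivity), kappa_rpow_critExp hn hs,
    ← rpow_mul hA.le, critExp]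
  congr 2
  field_simp
  ring

lemma hasDerivAt_bubbleProfile (hs : s < 2) {r : ℝ} (hr : 0 < r) :
    HasDerivAt (fun r : ℝ => kappa n s * (1 + r ^ (2 - s)) ^ (-(((n : ℝ) - 2) / (2 - s))))
      (-(kappa n s * ((n : ℝ) - 2) *
        (r ^ (1 - s) * (1 + r ^ (2 - s)) ^ (-(((n : ℝ) - 2) / (2 - s) + 1))))) r := by
  have h2s : (2 : ℝ) - s ≠ 0 := by linarith
  have hA : 0 < 1 + r ^ (2 - s) := by positivity
  refine ((((hasDerivAt_rpow_const (p := 2 - s) (Or.inl hr.ne')).const_add 1).rpow_const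
    (Or.inl hA.ne')).const_mul (kappa n s)).congr_deriv ?_
  rw [show (2 : ℝ) - s - 1 = 1 - s by ring, show -(((n : ℝ) - 2) / (2 - s)) - 1 =
    -(((n : ℝ) - 2) / (2 - s) + 1) by ring]
  field_simp

lemma norm_gradient_U1 (hn : 2 < n) (hs : s < 2) {X : EuclideanSpace ℝ (Fin n)} (hX : X ≠ 0) :
    ‖gradient (U1 n s) X‖ = kappa n s * ((n : ℝ) - 2) *
      (‖X‖ ^ (1 - s) * (1 + ‖X‖ ^ (2 - s)) ^ (-(((n : ℝ) - 2) / (2 - s) + 1))) := by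
  have hn' : (2 : ℝ) < n := by exact_mod_cast hn
  have hr : 0 < ‖X‖ := norm_pos_iff.mpr hX
  have hκ := kappa_pos hn hs
  have hn2 : 0 ≤ (n : ℝ) - 2 := by linarith
  rw [show U1 n s = fun Y => kappa n s * (1 + ‖Y‖ ^ (2 - s)) ^ (-(((n : ℝ) - 2) / (2 - s))) from rfl,
    norm_gradient_comp_norm hX (hasDerivAt_bubbleProfile hs hr), abs_neg,
    abs_of_nonneg (by positivity)]

lemma integral_norm_sq_mul_U1_sq (hn : 0 < n) :
    ∫ X : EuclideanSpace ℝ (Fin n), ‖X‖ ^ 2 * U1 n s X ^ 2 = unitSphereArea n * kappa n s ^ 2 *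
      radialMoment (2 - s) (n + 1) (2 * (((n : ℝ) - 2) / (2 - s))) := by
  have hpt : ∀ X : EuclideanSpace ℝ (Fin n), ‖X‖ ^ 2 * U1 n s X ^ 2 = kappa n s ^ 2 *
      ‖X‖ ^ (2 : ℝ) * (1 + ‖X‖ ^ (2 - s)) ^ (-(2 * (((n : ℝ) - 2) / (2 - s)))) := fun X => by
    have hA : 0 < 1 + ‖X‖ ^ (2 - s) := by positivity
    rw [U1, mul_pow, ← rpow_mul_natCast hA.le, rpow_ofNat]
    ring_nf
  rw [integral_congr_ae (Eventually.of_forall hpt),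
    integral_mul_norm_rpow_mul_one_add_norm_rpow hn]
  congr 2
  ring

lemma integral_norm_rpow_mul_U1_rpow_critExp (hn : 2 < n) (hs : s < 2) :
    ∫ X : EuclideanSpace ℝ (Fin n), ‖X‖ ^ (4 - s) * U1 n s X ^ critExp n s =
      unitSphereArea n * (kappa n s ^ 2 * (((n : ℝ) - s) * ((n : ℝ) - 2))) *
        radialMoment (2 - s) (n + 3 - s) (2 * (((n : ℝ) - 2) / (2 - s)) + 2) := by
  have hpt : ∀ X : EuclideanSpace ℝ (Fin n), ‖X‖ ^ (4 - s) * U1 n s X ^ critExp n s =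
      kappa n s ^ 2 * (((n : ℝ) - s) * ((n : ℝ) - 2)) * ‖X‖ ^ (4 - s) *
        (1 + ‖X‖ ^ (2 - s)) ^ (-(2 * (((n : ℝ) - 2) / (2 - s)) + 2)) := fun X => by
    rw [U1_rpow_critExp hn hs]
    ring
  rw [integral_congr_ae (Eventually.of_forall hpt),
    integral_mul_norm_rpow_mul_one_add_norm_rpow (by omega)]
  congr 2
  ring

lemma integral_norm_pow_four_mul_norm_gradient_U1_sq (hn : 2 < n) (hs : s < 2) :
    ∫ X : EuclideanSpace ℝ (Fin n), ‖X‖ ^ 4 * ‖gradient (U1 n s) X‖ ^ 2 =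
      unitSphereArea n * (kappa n s ^ 2 * ((n : ℝ) - 2) ^ 2) *
        radialMoment (2 - s) (n + 5 - 2 * s) (2 * (((n : ℝ) - 2) / (2 - s)) + 2) := by
  have hpt : ∀ X : EuclideanSpace ℝ (Fin n), X ≠ 0 → ‖X‖ ^ 4 * ‖gradient (U1 n s) X‖ ^ 2 =
      kappa n s ^ 2 * ((n : ℝ) - 2) ^ 2 * ‖X‖ ^ (6 - 2 * s) *
        (1 + ‖X‖ ^ (2 - s)) ^ (-(2 * (((n : ℝ) - 2) / (2 - s)) + 2)) := fun X hX => by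
    have hr : 0 < ‖X‖ := norm_pos_iff.mpr hX
    have hA : 0 < 1 + ‖X‖ ^ (2 - s) := by positivity
    rw [norm_gradient_U1 hn hs hX, show 6 - 2 * s = 4 + (1 - s) * 2 by ring, rpow_add hr,
      rpow_mul hr.le, show -(2 * (((n : ℝ) - 2) / (2 - s)) + 2) =
        -(((n : ℝ) - 2) / (2 - s) + 1) * 2 by ring, rpow_mul hA.le]
    simp only [rpow_ofNat]
    ring
  have hae : ∀ᵐ X : EuclideanSpace ℝ (Fin n), X ≠ 0 := by
    have : NeZero n := ⟨by omega⟩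
    exact compl_mem_ae_iff.mpr (measure_singleton 0)
  rw [integral_congr_ae (hae.mono hpt), integral_mul_norm_rpow_mul_one_add_norm_rpow (by omega)]
  congr 2
  ring

end Bubble

theorem stmt_11_general (n : ℕ) (hn : 7 ≤ n) (s : ℝ) (hs2 : s < 2) :
    (∫ X : EuclideanSpace ℝ (Fin n), ‖X‖ ^ 4 * ‖gradient (U1 n s) X‖ ^ 2) /
          (∫ X : EuclideanSpace ℝ (Fin n), ‖X‖ ^ 2 * (U1 n s X) ^ 2) -
        (2 / critExp n s) *
          ((∫ X : EuclideanSpace ℝ (Fin n), ‖X‖ ^ (4 - s) * (U1 n s X) ^ (critExp n s)) /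
            (∫ X : EuclideanSpace ℝ (Fin n), ‖X‖ ^ 2 * (U1 n s X) ^ 2)) =
      ((n : ℝ) + 2) * ((n : ℝ) - 2) * (10 - s) / (2 * (2 * (n : ℝ) - 2 - s)) := by
  have hn' : (7 : ℝ) ≤ n := by exact_mod_cast hn
  have hσ : 0 < 2 - s := by linarith
  have hb : 0 < 2 * (((n : ℝ) - 2) / (2 - s)) := mul_pos two_pos (div_pos (by linarith) hσ)
  have hσb : (2 - s) * (2 * (((n : ℝ) - 2) / (2 - s))) = 2 * (n - 2) := by field_simp
  have hI := radialMoment_pos (σ := 2 - s) (a := n + 1) (by linarith) hb.le (by rw [hσb]; linarith)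
  have hK := radialMoment_add_add_sub_radialMoment_add hσ (a := n + 1) (by linarith) hb
    (by rw [hσb]; linarith)
  rw [integral_norm_pow_four_mul_norm_gradient_U1_sq (by omega) hs2,
    integral_norm_sq_mul_U1_sq (by omega), integral_norm_rpow_mul_U1_rpow_critExp (by omega) hs2,
    show (n : ℝ) + 5 - 2 * s = n + 1 + (2 - s) + (2 - s) by ring,
    show (n : ℝ) + 3 - s = n + 1 + (2 - s) by ring,
    show 2 * (((n : ℝ) - 2) / (2 - s)) + 2 = 2 * (((n : ℝ) - 2) / (2 - s)) + 1 + 1 by ring,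
    eq_add_of_sub_eq hK, critExp]
  generalize radialMoment (2 - s) (n + 1) (2 * (((n : ℝ) - 2) / (2 - s))) = I at hI ⊢
  have hc := unitSphereArea_pos (n := n) (by omega)
  have hκ := kappa_pos (n := n) (s := s) (by omega) hs2
  have : (n : ℝ) - 2 ≠ 0 := by linarith
  have : (n : ℝ) - s ≠ 0 := by linarith
  have : 2 * (n : ℝ) - 2 - s ≠ 0 := by linarith
  field_simp
  ring

theorem stmt_11 (n : ℕ) (hn : 7 ≤ n) (s : ℝ) (hs0 : 0 < s) (hs2 : s < 2) :
    (∫ X : EuclideanSpace ℝ (Fin n), ‖X‖ ^ 4 * ‖gradient (U1 n s) X‖ ^ 2) /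
          (∫ X : EuclideanSpace ℝ (Fin n), ‖X‖ ^ 2 * (U1 n s X) ^ 2) -
        (2 / critExp n s) *
          ((∫ X : EuclideanSpace ℝ (Fin n), ‖X‖ ^ (4 - s) * (U1 n s X) ^ (critExp n s)) /
            (∫ X : EuclideanSpace ℝ (Fin n), ‖X‖ ^ 2 * (U1 n s X) ^ 2)) =
      ((n : ℝ) + 2) * ((n : ℝ) - 2) * (10 - s) / (2 * (2 * (n : ℝ) - 2 - s)) :=
  stmt_11_general n hn s hs2
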